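/- Let L, ν be natural numbers with ν+1 < L, and let h ∈ ℂ^L, f ∈ ℂ^{ν+1}, b ∈ ℂ^{L−ν−1}, N0 > 0, σ ∈ [0,1]. Assume F(ω) ≠ 0 for all ω ∈ [−π,π]. Then for every measurable function W : [−π,π] → ℂ with ∫_{−π}^{π} |W(ω)|² dω < ∞, one has I_LB(W,F,B) ≤ I_LB(W★,F,B), where W★(ω) = conj(H(ω))·(1+|F(ω)|² + σ·conj(F(ω))·B(ω))/(conj(F(ω))·(N0+|H(ω)|²)). -/

import Mathlib

open Complex Real MeasureTheory

/-- DTFT of the channel taps `h ∈ ℂ^L`. -/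
noncomputable def Hdtft {L : ℕ} (h : Fin L → ℂ) (ω : ℝ) : ℂ :=
  ∑ ℓ : Fin L, h ℓ * Complex.exp (Complex.I * (ω : ℂ) * ((ℓ : ℕ) : ℂ))

/-- DTFT of the target-response taps `f ∈ ℂ^{ν+1}`. -/
noncomputable def Fdtft {ν : ℕ} (f : Fin (ν + 1) → ℂ) (ω : ℝ) : ℂ :=
  ∑ k : Fin (ν + 1), f k * Complex.exp (Complex.I * (ω : ℂ) * ((k : ℕ) : ℂ))

/-- DTFT of the feedback-filter taps `b ∈ ℂ^{L−ν−1}` (supported on taps ν+1,…,L−1). -/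
noncomputable def Bdtft {L ν : ℕ} (b : Fin (L - ν - 1) → ℂ) (ω : ℝ) : ℂ :=
  ∑ j : Fin (L - ν - 1), b j * Complex.exp (Complex.I * (ω : ℂ) * ((ν + 1 + (j : ℕ) : ℕ) : ℂ))

/-- The quantity `Λ(ω)` appearing in the MILB. -/
noncomputable def Lam (N0 σ : ℝ) (W H F B : ℝ → ℂ) (ω : ℝ) : ℝ :=
  ‖F ω * W ω‖ ^ 2 * (N0 + ‖H ω‖ ^ 2) +
    σ * ‖F ω * B ω‖ ^ 2 -
    2 * σ * ‖F ω‖ ^ 2 * (H ω * W ω * (starRingEnd ℂ) (B ω)).re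

/-- The mutual-information lower bound functional `I_LB(W,F,B)`. -/
noncomputable def ILB (N0 σ : ℝ) (W H F B : ℝ → ℂ) : ℝ :=
  (1 / (2 * π)) *
      ∫ ω in (-π)..π,
        (Real.log (1 + ‖F ω‖ ^ 2) - ‖F ω‖ ^ 2 -
          Lam N0 σ W H F B ω / (1 + ‖F ω‖ ^ 2)) +
    (1 / π) *
      ∫ ω in (-π)..π, ((starRingEnd ℂ) (F ω) * (W ω * H ω - (σ : ℂ) * B ω)).re

/-- The optimal prefilter `W★` of Theorem 1. -/
noncomputable def Wstar (N0 σ : ℝ) (H F B : ℝ → ℂ) (ω : ℝ) : ℂ :=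
  (starRingEnd ℂ) (H ω) *
      (1 + (‖F ω‖ ^ 2 : ℂ) + (σ : ℂ) * (starRingEnd ℂ) (F ω) * B ω) /
    ((starRingEnd ℂ) (F ω) * ((N0 : ℂ) + (‖H ω‖ ^ 2 : ℂ)))

/-!
At each frequency the integrand of `I_LB` is a concave quadratic in the value `w` of the
prefilter, `Re (z w) - a |w|² + const` with `a = |F|² (N0 + |H|²) / (1 + |F|²) > 0` because
`F ≠ 0`, and `W★ = conj z / (2a)` is its maximiser. Integrating this pointwise inequality gives
the claim; on the compact interval `[-π, π]` square-integrability of `W` makes all terms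
integrable.
-/

open ComplexConjugate

theorem continuous_Hdtft {L : ℕ} (h : Fin L → ℂ) : Continuous (Hdtft h) := by
  unfold Hdtft; fun_prop

theorem continuous_Fdtft {ν : ℕ} (f : Fin (ν + 1) → ℂ) : Continuous (Fdtft f) := by
  unfold Fdtft; fun_prop

theorem continuous_Bdtft {L ν : ℕ} (b : Fin (L - ν - 1) → ℂ) :
    Continuous (Bdtft (L := L) (ν := ν) b) := by
  unfold Bdtft; fun_prop

theorem Complex.re_mul_sub_mul_normSq_le {a : ℝ} (ha : 0 ≤ a) {z c : ℂ}
    (hc : (2 * a : ℂ) * c = conj z) (w : ℂ) :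
    (z * w).re - a * normSq w ≤ (z * c).re - a * normSq c := by
  have hz : z = 2 * a * conj c := by
    simpa [map_ofNat] using (congrArg conj hc).symm
  have hsq : (z * c).re - a * normSq c - ((z * w).re - a * normSq w) = a * normSq (w - c) := by
    subst hz
    simp only [normSq_apply, mul_re, mul_im, sub_re, sub_im, conj_re, conj_im, ofReal_re,
      ofReal_im, re_ofNat, im_ofNat]
    ring
  nlinarith [mul_nonneg ha (normSq_nonneg (w - c))]

/-- The integrand of `2π · ILB` at one frequency, where `F, H, B, W` take the values `F, H, B, w`. -/
noncomputable def milbIntegrand (N0 σ : ℝ) (F H B w : ℂ) : ℝ :=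
  Real.log (1 + ‖F‖ ^ 2) - ‖F‖ ^ 2 -
      (‖F * w‖ ^ 2 * (N0 + ‖H‖ ^ 2) + σ * ‖F * B‖ ^ 2 - 2 * σ * ‖F‖ ^ 2 * (H * w * conj B).re) /
        (1 + ‖F‖ ^ 2) +
    2 * (conj F * (w * H - σ * B)).re

theorem milbIntegrand_apply (N0 σ : ℝ) (W H F B : ℝ → ℂ) (ω : ℝ) :
    milbIntegrand N0 σ (F ω) (H ω) (B ω) (W ω) =
      (Real.log (1 + ‖F ω‖ ^ 2) - ‖F ω‖ ^ 2 - Lam N0 σ W H F B ω / (1 + ‖F ω‖ ^ 2)) +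
        2 * (conj (F ω) * (W ω * H ω - σ * B ω)).re :=
  rfl

noncomputable def milbCurvature (N0 : ℝ) (F H : ℂ) : ℝ :=
  normSq F * (N0 + normSq H) / (1 + normSq F)

noncomputable def milbLinearCoeff (σ : ℝ) (F H B : ℂ) : ℂ :=
  (2 * σ * normSq F / (1 + normSq F) : ℝ) * (H * conj B) + 2 * conj F * H

theorem milbIntegrand_eq (N0 σ : ℝ) (F H B w : ℂ) :
    milbIntegrand N0 σ F H B w =
      (milbLinearCoeff σ F H B * w).re - milbCurvature N0 F H * normSq w +
        (Real.log (1 + ‖F‖ ^ 2) - ‖F‖ ^ 2 - σ * normSq (F * B) / (1 + normSq F) -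
          2 * σ * (conj F * B).re) := by
  have hd : 1 + normSq F ≠ 0 := (add_pos_of_pos_of_nonneg one_pos (normSq_nonneg F)).ne'
  simp only [milbIntegrand, milbLinearCoeff, milbCurvature, norm_mul, mul_pow, Complex.sq_norm,
    normSq_apply, mul_re, mul_im, add_re, add_im, sub_re, sub_im, conj_re, conj_im, ofReal_re,
    ofReal_im, re_ofNat, im_ofNat] at hd ⊢
  field_simp
  ring

theorem milbCurvature_pos {N0 : ℝ} (hN0 : 0 < N0) {F : ℂ} (hF : F ≠ 0) (H : ℂ) :
    0 < milbCurvature N0 F H := by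
  have hF2 := normSq_pos.2 hF
  have hH2 := normSq_nonneg H
  unfold milbCurvature
  positivity

theorem two_mul_milbCurvature_mul_Wstar {N0 : ℝ} (hN0 : 0 < N0) (σ : ℝ) (H F B : ℝ → ℂ)
    {ω : ℝ} (hF : F ω ≠ 0) :
    (2 * milbCurvature N0 (F ω) (H ω) : ℂ) * Wstar N0 σ H F B ω =
      conj (milbLinearCoeff σ (F ω) (H ω) (B ω)) := by
  unfold Wstar milbCurvature milbLinearCoeff
  generalize F ω = f at *
  generalize H ω = h
  generalize B ω = b
  have hf' : conj f ≠ 0 := (map_ne_zero _).2 hF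
  have hN : (N0 : ℂ) + (‖h‖ : ℂ) ^ 2 ≠ 0 := by
    exact_mod_cast (by positivity : N0 + ‖h‖ ^ 2 ≠ 0)
  have hd : (1 : ℂ) + (‖f‖ : ℂ) ^ 2 ≠ 0 := by
    exact_mod_cast (by positivity : 1 + ‖f‖ ^ 2 ≠ 0)
  simp only [← Complex.sq_norm, map_add, map_mul, conj_conj, conj_ofReal, map_ofNat]
  push_cast
  field_simp
  rw [← Complex.ofReal_pow, Complex.sq_norm, ← mul_conj]
  ring

theorem milbIntegrand_le_Wstar {N0 : ℝ} (hN0 : 0 < N0) (σ : ℝ) (H F B : ℝ → ℂ) {ω : ℝ}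
    (hF : F ω ≠ 0) (w : ℂ) :
    milbIntegrand N0 σ (F ω) (H ω) (B ω) w ≤
      milbIntegrand N0 σ (F ω) (H ω) (B ω) (Wstar N0 σ H F B ω) := by
  rw [milbIntegrand_eq, milbIntegrand_eq]
  gcongr ?_ + _
  exact re_mul_sub_mul_normSq_le (milbCurvature_pos hN0 hF _).le
    (two_mul_milbCurvature_mul_Wstar hN0 σ H F B hF) w

theorem integrableOn_of_integrableOn_norm_sq {α E : Type*} [MeasurableSpace α]
    [NormedAddCommGroup E] {μ : Measure α} {s : Set α} (hs : μ s ≠ ⊤) {f : α → E}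
    (hf : AEStronglyMeasurable f (μ.restrict s)) (hf2 : IntegrableOn (fun x => ‖f x‖ ^ 2) s μ) :
    IntegrableOn f s μ :=
  have := isFiniteMeasure_restrict.2 hs
  ((memLp_two_iff_integrable_sq_norm hf).2 hf2).integrable one_le_two

section Integrability

variable {K : Set ℝ} {H F B W : ℝ → ℂ}

theorem integrableOn_Lam (N0 σ : ℝ) (hK : IsCompact K) (hH : Continuous H) (hF : Continuous F)
    (hB : Continuous B) (hW : IntegrableOn W K) (hW2 : IntegrableOn (fun ω => ‖W ω‖ ^ 2) K) :
    IntegrableOn (Lam N0 σ W H F B) K := by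
  have hLam : Lam N0 σ W H F B = fun ω =>
      (‖F ω‖ ^ 2 * (N0 + ‖H ω‖ ^ 2)) * ‖W ω‖ ^ 2 + σ * ‖F ω * B ω‖ ^ 2 -
        2 * σ * ‖F ω‖ ^ 2 * ((H ω * conj (B ω)) * W ω).re := by
    ext ω
    simp only [Lam, norm_mul, mul_pow, mul_right_comm (H ω)]
    ring
  rw [hLam]
  have hquad : IntegrableOn (fun ω => (‖F ω‖ ^ 2 * (N0 + ‖H ω‖ ^ 2)) * ‖W ω‖ ^ 2) K :=
    hW2.continuousOn_mul (by fun_prop) hK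
  have hconst : IntegrableOn (fun ω => σ * ‖F ω * B ω‖ ^ 2) K :=
    ContinuousOn.integrableOn_compact hK (by fun_prop)
  have hre : IntegrableOn (fun ω => ((H ω * conj (B ω)) * W ω).re) K :=
    (hW.continuousOn_mul (g := fun ω => H ω * conj (B ω)) (by fun_prop) hK).re
  have hlin : IntegrableOn (fun ω => 2 * σ * ‖F ω‖ ^ 2 * ((H ω * conj (B ω)) * W ω).re) K :=
    hre.continuousOn_mul (g := fun ω => 2 * σ * ‖F ω‖ ^ 2) (by fun_prop) hK
  exact (hquad.add hconst).sub hlin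

theorem integrableOn_ILB_integrand_left (N0 σ : ℝ) (hK : IsCompact K) (hH : Continuous H)
    (hF : Continuous F) (hB : Continuous B) (hW : IntegrableOn W K)
    (hW2 : IntegrableOn (fun ω => ‖W ω‖ ^ 2) K) :
    IntegrableOn (fun ω => Real.log (1 + ‖F ω‖ ^ 2) - ‖F ω‖ ^ 2 -
      Lam N0 σ W H F B ω / (1 + ‖F ω‖ ^ 2)) K := by
  have hd : ∀ ω, 1 + ‖F ω‖ ^ 2 ≠ 0 := fun ω => by positivity
  have hlog : Continuous fun ω => Real.log (1 + ‖F ω‖ ^ 2) := Continuous.log (by fun_prop) hd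
  refine (ContinuousOn.integrableOn_compact hK (by fun_prop)).sub ?_
  simp_rw [div_eq_mul_inv]
  exact (integrableOn_Lam N0 σ hK hH hF hB hW hW2).mul_continuousOn
    ((by fun_prop : Continuous fun ω => 1 + ‖F ω‖ ^ 2).inv₀ hd).continuousOn hK

theorem integrableOn_ILB_integrand_right (σ : ℝ) (hK : IsCompact K) (hH : Continuous H)
    (hF : Continuous F) (hB : Continuous B) (hW : IntegrableOn W K) :
    IntegrableOn (fun ω => (conj (F ω) * (W ω * H ω - σ * B ω)).re) K := by
  have hsplit : (fun ω => conj (F ω) * (W ω * H ω - σ * B ω)) =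
      fun ω => (conj (F ω) * H ω) * W ω - σ * conj (F ω) * B ω := by
    ext ω
    ring
  have hint : IntegrableOn (fun ω => conj (F ω) * (W ω * H ω - σ * B ω)) K := by
    rw [hsplit]
    exact (hW.continuousOn_mul (g := fun ω => conj (F ω) * H ω) (by fun_prop) hK).sub
      (ContinuousOn.integrableOn_compact hK (by fun_prop))
  exact hint.re

theorem integrableOn_milbIntegrand (N0 σ : ℝ) (hK : IsCompact K) (hH : Continuous H)
    (hF : Continuous F) (hB : Continuous B) (hW : IntegrableOn W K)
    (hW2 : IntegrableOn (fun ω => ‖W ω‖ ^ 2) K) :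
    IntegrableOn (fun ω => milbIntegrand N0 σ (F ω) (H ω) (B ω) (W ω)) K :=
  (integrableOn_ILB_integrand_left N0 σ hK hH hF hB hW hW2).add
    ((integrableOn_ILB_integrand_right σ hK hH hF hB hW).const_mul 2)

end Integrability

theorem ILB_eq_integral_milbIntegrand (N0 σ : ℝ) {H F B W : ℝ → ℂ} (hH : Continuous H)
    (hF : Continuous F) (hB : Continuous B) (hW : IntegrableOn W (Set.Icc (-π) π))
    (hW2 : IntegrableOn (fun ω => ‖W ω‖ ^ 2) (Set.Icc (-π) π)) :
    ILB N0 σ W H F B =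
      1 / (2 * π) * ∫ ω in (-π)..π, milbIntegrand N0 σ (F ω) (H ω) (B ω) (W ω) := by
  have hπ : -π ≤ π := by linarith [pi_pos]
  have hl := (intervalIntegrable_iff_integrableOn_Icc_of_le hπ).2
    (integrableOn_ILB_integrand_left N0 σ isCompact_Icc hH hF hB hW hW2)
  have hr := (intervalIntegrable_iff_integrableOn_Icc_of_le hπ).2
    (integrableOn_ILB_integrand_right σ isCompact_Icc hH hF hB hW)
  -- The binder of the first `∫` in `ILB` extends to the right, so the second summand of `ILB`
  -- is a constant inside the first integral.
  simp only [ILB, milbIntegrand_apply]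
  rw [intervalIntegral.integral_add hl intervalIntegrable_const, intervalIntegral.integral_const,
    smul_eq_mul, intervalIntegral.integral_add hl (hr.const_mul 2),
    intervalIntegral.integral_const_mul]
  congr 2
  field_simp
  ring

theorem continuousOn_Wstar {N0 : ℝ} (hN0 : 0 < N0) (σ : ℝ) {H F B : ℝ → ℂ} (hH : Continuous H)
    (hF : Continuous F) (hB : Continuous B) {K : Set ℝ} (hFK : ∀ ω ∈ K, F ω ≠ 0) :
    ContinuousOn (Wstar N0 σ H F B) K := by
  unfold Wstar
  refine ContinuousOn.div (by fun_prop) (by fun_prop) fun ω hω => ?_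
  have hN : N0 + ‖H ω‖ ^ 2 ≠ 0 := by positivity
  exact mul_ne_zero ((map_ne_zero _).2 (hFK ω hω)) (by exact_mod_cast hN)

theorem stmt1_general (L ν : ℕ) (h : Fin L → ℂ) (f : Fin (ν + 1) → ℂ)
    (b : Fin (L - ν - 1) → ℂ) (N0 σ : ℝ) (hN0 : 0 < N0)
    (hF : ∀ ω ∈ Set.Icc (-π) π, Fdtft f ω ≠ 0) :
    ∀ W : ℝ → ℂ, Measurable W →
      IntegrableOn (fun ω => ‖W ω‖ ^ 2) (Set.Icc (-π) π) →
      ILB N0 σ W (Hdtft h) (Fdtft f) (Bdtft (L := L) (ν := ν) b) ≤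
        ILB N0 σ (Wstar N0 σ (Hdtft h) (Fdtft f) (Bdtft (L := L) (ν := ν) b))
          (Hdtft h) (Fdtft f) (Bdtft (L := L) (ν := ν) b) := by
  intro W hWm hW2
  have hH := continuous_Hdtft h
  have hFc := continuous_Fdtft f
  have hB := continuous_Bdtft (L := L) (ν := ν) b
  have hW : IntegrableOn W (Set.Icc (-π) π) :=
    integrableOn_of_integrableOn_norm_sq measure_Icc_lt_top.ne hWm.aestronglyMeasurable hW2
  have hWstar := continuousOn_Wstar hN0 σ hH hFc hB hF
  have hWstar1 : IntegrableOn _ (Set.Icc (-π) π) := hWstar.integrableOn_compact isCompact_Icc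
  have hWstar2 : IntegrableOn _ (Set.Icc (-π) π) :=
    (hWstar.norm.pow 2).integrableOn_compact isCompact_Icc
  have hπ : -π ≤ π := by linarith [pi_pos]
  rw [ILB_eq_integral_milbIntegrand N0 σ hH hFc hB hW hW2,
    ILB_eq_integral_milbIntegrand N0 σ hH hFc hB hWstar1 hWstar2]
  gcongr 1 / (2 * π) * ?_
  refine intervalIntegral.integral_mono_on hπ ?_ ?_ fun ω hω =>
    milbIntegrand_le_Wstar hN0 σ _ _ _ (hF ω hω) (W ω)
  · exact (intervalIntegrable_iff_integrableOn_Icc_of_le hπ).2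
      (integrableOn_milbIntegrand N0 σ isCompact_Icc hH hFc hB hW hW2)
  · exact (intervalIntegrable_iff_integrableOn_Icc_of_le hπ).2
      (integrableOn_milbIntegrand N0 σ isCompact_Icc hH hFc hB hWstar1 hWstar2)

/-- Prefilter optimality in Theorem 1: for fixed target response `F` and feedback
filter `B`, the stationary prefilter `W★` globally maximizes `I_LB` over all
square-integrable prefilters. -/
theorem stmt1 (L ν : ℕ) (hLν : ν + 1 < L) (h : Fin L → ℂ) (f : Fin (ν + 1) → ℂ)
    (b : Fin (L - ν - 1) → ℂ) (N0 σ : ℝ) (hN0 : 0 < N0) (hσ0 : 0 ≤ σ) (hσ1 : σ ≤ 1)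
    (hF : ∀ ω ∈ Set.Icc (-π) π, Fdtft f ω ≠ 0) :
    ∀ W : ℝ → ℂ, Measurable W →
      IntegrableOn (fun ω => ‖W ω‖ ^ 2) (Set.Icc (-π) π) →
      ILB N0 σ W (Hdtft h) (Fdtft f) (Bdtft (L := L) (ν := ν) b) ≤
        ILB N0 σ (Wstar N0 σ (Hdtft h) (Fdtft f) (Bdtft (L := L) (ν := ν) b))
          (Hdtft h) (Fdtft f) (Bdtft (L := L) (ν := ν) b) :=
  stmt1_general L ν h f b N0 σ hN0 hF
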